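/- The probability that a patient under appropriate treatment reaches remission without a therapeutic escape equals exp(−(β̃^{α̃}/(−α̃ v'))(ζ0^{α̃} − ζ^{α̃})), and this probability tends to 1 as β̃ → ∞ (for fixed α̃ ∈ (−1,0), ζ > ζ0, v' > 0). -/

import Mathlib

open Filter

lemma my_integral_exp_mul (c : ℝ) (hc : c ≠ 0) (a b : ℝ) :
    ∫ x in a..b, Real.exp (c * x) = (Real.exp (c * b) - Real.exp (c * a)) / c := by
  have D : ∀ x : ℝ, HasDerivAt (fun y : ℝ => Real.exp (c * y) / c) (Real.exp (c * x)) x := by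
    intro x
    have h1 : HasDerivAt (fun y : ℝ => c * y) c x := by
      simpa using (hasDerivAt_id x).const_mul c
    have h2 := (h1.exp).div_const c
    simpa [mul_comm, mul_div_cancel_left₀ _ hc] using h2
  rw [intervalIntegral.integral_eq_sub_of_hasDerivAt (fun x _ => D x)
      ((Real.continuous_exp.comp (continuous_const.mul continuous_id)).intervalIntegrable a b)]
  ring

/-- The probability of reaching remission with no therapeutic escape equals
`exp(−(β̃^α̃/(−α̃ v'))(ζ0^α̃ − ζ^α̃))`, and it tends to 1 as `β̃ → ∞`. -/
theorem escape_free_probability_tendsto_one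
    (ζ0 ζ v' α : ℝ) (hζ0 : 0 < ζ0) (hζ : ζ0 < ζ) (hv : 0 < v')
    (hα₁ : -1 < α) (hα₂ : α < 0) :
    (∀ β : ℝ, 0 < β →
      Real.exp (-∫ τ in (0:ℝ)..((Real.log ζ - Real.log ζ0) / v'),
          (β * (ζ * Real.exp (-v' * τ))) ^ α) =
        Real.exp (-(β ^ α / (-α * v') * (ζ0 ^ α - ζ ^ α)))) ∧
    Tendsto (fun β : ℝ => Real.exp (-(β ^ α / (-α * v') * (ζ0 ^ α - ζ ^ α))))
      atTop (nhds 1) := by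
  have hζpos : 0 < ζ := lt_trans hζ0 hζ
  have hc : -v' * α ≠ 0 := mul_ne_zero (neg_ne_zero.mpr hv.ne') hα₂.ne
  constructor
  · intro β hβ
    congr 1
    congr 1
    have hrw : ∀ τ : ℝ, (β * (ζ * Real.exp (-v' * τ))) ^ α
        = (β * ζ) ^ α * Real.exp (-v' * α * τ) := by
      intro τ
      rw [show β * (ζ * Real.exp (-v' * τ)) = (β * ζ) * Real.exp (-v' * τ) by ring,
        Real.mul_rpow (by positivity) (Real.exp_nonneg _),
        ← Real.exp_log (Real.exp_pos (-v' * τ)), Real.log_exp,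
        ← Real.exp_log (Real.exp_pos _)]
      rw [Real.rpow_def_of_pos (Real.exp_pos _), Real.log_exp, Real.log_exp]
      ring_nf
    rw [intervalIntegral.integral_congr (fun τ _ => hrw τ),
      intervalIntegral.integral_const_mul, my_integral_exp_mul _ hc]
    have hT : (-v' * α) * ((Real.log ζ - Real.log ζ0) / v')
        = Real.log ζ * (-α) + Real.log ζ0 * α := by
      field_simp; ring
    rw [hT, Real.exp_add, ← Real.rpow_def_of_pos hζpos, ← Real.rpow_def_of_pos hζ0]
    rw [Real.mul_rpow hβ.le hζpos.le]
    rw [Real.rpow_neg hζpos.le]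
    have hζα : ζ ^ α ≠ 0 := (Real.rpow_pos_of_pos hζpos α).ne'
    have hαne : α ≠ 0 := ne_of_lt hα₂
    field_simp
    ring_nf
    simp [Real.exp_zero]
  · have h0 : Tendsto (fun β : ℝ => β ^ α) atTop (nhds 0) := by
      have := tendsto_rpow_neg_atTop (y := -α) (by linarith)
      simpa using this
    have h2 := (Real.continuous_exp.tendsto _).comp
      (((h0.div_const (-α * v')).mul_const (ζ0 ^ α - ζ ^ α)).neg)
    simpa [Function.comp_def] using h2
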